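/- The diagram 𝒟 is path-connected: for any two points Q₀, Q₁ ∈ 𝒟 there exists a continuous map γ : [0,1] → ℝ² with γ(0) = Q₀, γ(1) = Q₁, and γ(t) ∈ 𝒟 for all t ∈ [0,1]. -/

import Mathlib

open MeasureTheory Metric Set Filter

noncomputable section

abbrev E2 := EuclideanSpace ℝ (Fin 2)

/-- Area: two-dimensional Lebesgue measure. -/
def area (Ω : Set E2) : ℝ := (volume Ω).toReal

/-- Perimeter: one-dimensional Hausdorff measure of the topological boundary. -/
def perim (Ω : Set E2) : ℝ := (μH[1] (frontier Ω)).toReal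

/-- Moment of inertia about the origin. -/
def inertia (Ω : Set E2) : ℝ := ∫ p in Ω, ‖p‖ ^ 2

/-- The class 𝒜: nonempty bounded open convex subsets of ℝ², symmetric w.r.t. both axes. -/
def memA (Ω : Set E2) : Prop :=
  Ω.Nonempty ∧ IsOpen Ω ∧ Bornology.IsBounded Ω ∧ Convex ℝ Ω ∧
    (∀ p : E2, p ∈ Ω ↔ (!₂[-(p 0), p 1] : E2) ∈ Ω) ∧
    (∀ p : E2, p ∈ Ω ↔ (!₂[p 0, -(p 1)] : E2) ∈ Ω)

def xF (Ω : Set E2) : ℝ := (area Ω) ^ 2 / (2 * Real.pi * inertia Ω)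

def yF (Ω : Set E2) : ℝ := 4 * Real.pi * area Ω / (perim Ω) ^ 2

def diag : Set (ℝ × ℝ) := {q | ∃ Ω : Set E2, memA Ω ∧ q = (xF Ω, yF Ω)}

def Lplus (x : ℝ) : ℝ := sSup {y | ∃ Ω : Set E2, memA Ω ∧ xF Ω = x ∧ yF Ω = y}

def Lminus (x : ℝ) : ℝ := sInf {y | ∃ Ω : Set E2, memA Ω ∧ xF Ω = x ∧ yF Ω = y}

def rhombus (a b : ℝ) : Set E2 :=
  interior (convexHull ℝ {(!₂[a, 0] : E2), !₂[-a, 0], !₂[0, b], !₂[0, -b]})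

open scoped Pointwise RealInnerProductSpace NNReal ENNReal Topology

/-!
Interpolate the gauges: for `Ω₀, Ω₁ ∈ 𝒜` let `Ω_t = {p | (1 - t) g_{Ω₀}(p) + t g_{Ω₁}(p) < 1}`.
Each `Ω_t` is again open, bounded, convex and doubly symmetric, and `Ω_0 = Ω₀`, `Ω_1 = Ω₁`.
Since the two gauges are comparable, `Ω_s ⊆ (1 + K|s - t|) Ω_t`. Area, perimeter and inertia are
monotone under inclusion (for the perimeter of convex sets: the nearest-point projection onto
`closure A` is 1-Lipschitz and maps `∂B` onto `∂A` when `A ⊆ B`) and homogeneous of degree 2, 1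
and 4, so each changes by a factor at most `(1 + K|s - t|)^k` between `Ω_s` and `Ω_t`. This makes
`t ↦ (x(Ω_t), y(Ω_t))` continuous.
-/

theorem IsPreconnected.inter_frontier_nonempty {X : Type*} [TopologicalSpace X] {s t : Set X}
    (hs : IsPreconnected s) (hst : (s ∩ t).Nonempty) (hs't : (s \ t).Nonempty) :
    (s ∩ frontier t).Nonempty := by
  by_contra h
  have hcover : s ⊆ interior t ∪ (closure t)ᶜ := fun x hx => by
    by_cases hxt : x ∈ interior t
    · exact Or.inl hxt
    · exact Or.inr fun hxc => h ⟨x, hx, hxc, hxt⟩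
  obtain ⟨x, hxs, hxt⟩ := hst
  obtain ⟨y, hys, hyt⟩ := hs't
  obtain ⟨z, -, hzi, hzc⟩ := hs _ _ isOpen_interior isClosed_closure.isOpen_compl hcover
    ⟨x, hxs, (hcover hxs).resolve_right (· (subset_closure hxt))⟩
    ⟨y, hys, (hcover hys).resolve_left (hyt <| interior_subset ·)⟩
  exact hzc (subset_closure (interior_subset hzi))

theorem frontier_smul₀ {G₀ X : Type*} [GroupWithZero G₀] [MulAction G₀ X] [TopologicalSpace X]
    [ContinuousConstSMul G₀ X] {c : G₀} (hc : c ≠ 0) (s : Set X) :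
    frontier (c • s) = c • frontier s := by
  rw [frontier, frontier, closure_smul₀' hc, interior_smul₀ hc, smul_set_sdiff₀ hc]

section Projection

variable {E : Type*} [NormedAddCommGroup E] [InnerProductSpace ℝ E]

theorem norm_sub_sq_le_inner_of_inner_le_zero {K : Set E} {q q' v v' : E} (hv : v ∈ K)
    (hv' : v' ∈ K) (hq : ∀ w ∈ K, ⟪q - v, w - v⟫ ≤ 0) (hq' : ∀ w ∈ K, ⟪q' - v', w - v'⟫ ≤ 0) :
    ‖v - v'‖ ^ 2 ≤ ⟪q - q', v - v'⟫ := by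
  have h := hq v' hv'
  have h' := hq' v hv
  have expand : ⟪q - q', v - v'⟫ = ‖v - v'‖ ^ 2 - ⟪q - v, v' - v⟫ - ⟪q' - v', v - v'⟫ := by
    rw [← real_inner_self_eq_norm_sq, show v' - v = -(v - v') by abel, inner_neg_right,
      show q - q' = (q - v) - (q' - v') + (v - v') by abel, inner_add_left, inner_sub_left]
    ring
  linarith

theorem exists_lipschitzWith_one_proj {K : Set E} (hK : Convex ℝ K) (hKc : IsComplete K)
    (hne : K.Nonempty) :
    ∃ f : E → E, LipschitzWith 1 f ∧
      ∀ q, ∀ v ∈ K, (∀ w ∈ K, ⟪q - v, w - v⟫ ≤ 0) → f q = v := by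
  have hproj (q : E) : ∃ v ∈ K, ∀ w ∈ K, ⟪q - v, w - v⟫ ≤ 0 := by
    obtain ⟨v, hvK, hv⟩ := exists_norm_eq_iInf_of_complete_convex hne hKc hK q
    exact ⟨v, hvK, (norm_eq_iInf_iff_real_inner_le_zero hK hvK).1 hv⟩
  choose f hfK hf using hproj
  refine ⟨f, LipschitzWith.mk_one fun q q' => ?_, fun q v hv hq => ?_⟩
  · have h := norm_sub_sq_le_inner_of_inner_le_zero (hfK q) (hfK q') (hf q) (hf q')
    rw [dist_eq_norm, dist_eq_norm]
    nlinarith [real_inner_le_norm (q - q') (f q - f q'), norm_nonneg (f q - f q'),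
      norm_nonneg (q - q')]
  · have h := norm_sub_sq_le_inner_of_inner_le_zero (hfK q) hv (hf q) hq
    rw [sub_self, inner_zero_left] at h
    exact sub_eq_zero.1 (norm_eq_zero.1 (pow_eq_zero_iff two_ne_zero |>.1
      (le_antisymm h (sq_nonneg _))))

end Projection

theorem exists_add_smul_notMem_of_isBounded {E : Type*} [NormedAddCommGroup E] [NormedSpace ℝ E]
    {B : Set E} (hB : Bornology.IsBounded B) (p : E)
    {v : E} (hv : v ≠ 0) : ∃ τ : ℝ, 0 ≤ τ ∧ p + τ • v ∉ B := by
  obtain ⟨C, hC⟩ := hB.subset_closedBall (0 : E)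
  have hv' : 0 < ‖v‖ := norm_pos_iff.2 hv
  set τ := (|C| + ‖p‖ + 1) / ‖v‖
  refine ⟨τ, by positivity, fun hmem => ?_⟩
  have hle : ‖p + τ • v‖ ≤ C := by simpa using hC hmem
  have hτv : ‖τ • v‖ = |C| + ‖p‖ + 1 := by
    rw [norm_smul, Real.norm_of_nonneg (by positivity), div_mul_cancel₀ _ hv'.ne']
  have htri : ‖τ • v‖ ≤ ‖p + τ • v‖ + ‖p‖ := by
    simpa using norm_sub_le (p + τ • v) p
  linarith [le_abs_self C]

section Frontier

variable {E : Type*} [NormedAddCommGroup E] [InnerProductSpace ℝ E] [CompleteSpace E]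

/-- Follow an outer normal of `A` at the frontier point until the ray leaves `B`. -/
theorem frontier_subset_image_frontier_of_proj {A B : Set E} (hA : Convex ℝ A) (hAo : IsOpen A)
    (hB : Bornology.IsBounded B) (hAB : A ⊆ B) {f : E → E}
    (hf : ∀ q, ∀ v ∈ closure A, (∀ w ∈ closure A, ⟪q - v, w - v⟫ ≤ 0) → f q = v) :
    frontier A ⊆ f '' frontier B := by
  intro p hp
  have hpA : p ∉ A := by rw [hAo.frontier_eq] at hp; exact hp.2
  obtain ⟨φ, hφ⟩ := geometric_hahn_banach_open_point hA hAo hpA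
  set v : E := (InnerProductSpace.toDual ℝ E).symm φ
  have hv : ∀ y, ⟪v, y⟫ = φ y := fun y => InnerProductSpace.toDual_symm_apply
  have hv0 : v ≠ 0 := by
    obtain ⟨a, ha⟩ := closure_nonempty_iff.1 ⟨p, hp.1⟩
    intro hv0
    have := hφ a ha
    rw [← hv, ← hv, hv0, inner_zero_left, inner_zero_left] at this
    exact lt_irrefl _ this
  have hφA : ∀ w ∈ closure A, φ w ≤ φ p :=
    fun w hw => closure_minimal (fun a ha => (hφ a ha).le)
      (isClosed_le φ.continuous continuous_const) hw
  obtain ⟨τ₁, hτ₁, hout⟩ := exists_add_smul_notMem_of_isBounded hB.closure p hv0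
  have hray : IsPreconnected ((fun τ : ℝ => p + τ • v) '' Ici 0) :=
    isPreconnected_Ici.image _ (by fun_prop)
  obtain ⟨q, ⟨τ, hτ, rfl⟩, hq⟩ := hray.inter_frontier_nonempty (t := closure B)
    ⟨p, ⟨0, mem_Ici.2 le_rfl, by simp⟩, closure_mono hAB hp.1⟩
    ⟨_, ⟨τ₁, hτ₁, rfl⟩, hout⟩
  refine ⟨_, frontier_closure_subset hq, hf _ p hp.1 fun w hw => ?_⟩
  rw [add_sub_cancel_left, real_inner_smul_left, hv, map_sub]
  exact mul_nonpos_of_nonneg_of_nonpos hτ (sub_nonpos.2 (hφA w hw))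

theorem hausdorffMeasure_frontier_mono [MeasurableSpace E] [BorelSpace E] {A B : Set E}
    (hA : Convex ℝ A) (hAo : IsOpen A) (hB : Bornology.IsBounded B) (hAB : A ⊆ B) {d : ℝ}
    (hd : 0 ≤ d) : μH[d] (frontier A) ≤ μH[d] (frontier B) := by
  rcases A.eq_empty_or_nonempty with rfl | hAne
  · simp
  obtain ⟨f, hlip, hf⟩ := exists_lipschitzWith_one_proj hA.closure isClosed_closure.isComplete
    hAne.closure
  calc μH[d] (frontier A) ≤ μH[d] (f '' frontier B) :=
        measure_mono (frontier_subset_image_frontier_of_proj hA hAo hB hAB hf)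
    _ ≤ (1 : ℝ≥0) ^ d * μH[d] (frontier B) := hlip.hausdorffMeasure_image_le hd _
    _ = μH[d] (frontier B) := by simp

end Frontier

section Gauge

variable {E : Type*} [NormedAddCommGroup E] [NormedSpace ℝ E]

theorem convexOn_gauge {s : Set E} (hs : Convex ℝ s) (habs : Absorbent ℝ s) :
    ConvexOn ℝ univ (gauge s) :=
  ⟨convex_univ, fun x _ y _ a b ha hb _ => by
    simpa only [gauge_smul_of_nonneg ha, gauge_smul_of_nonneg hb] using
      gauge_add_le hs habs (a • x) (b • y)⟩

theorem gauge_apply_eq_of_mem_iff {s : Set E} {σ : E → E}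
    (hσ : ∀ (c : ℝ) x, σ (c • x) = c • σ x) (hs : ∀ x, x ∈ s ↔ σ x ∈ s) (x : E) :
    gauge s (σ x) = gauge s x := by
  simp only [gauge_def', ← hσ, ← hs]

theorem exists_gauge_le_mul_gauge {s₀ s₁ : Set E} (h₀ : s₀ ∈ 𝓝 0) (h₁ : s₁ ∈ 𝓝 0)
    (hb : Bornology.IsBounded s₁) : ∃ M, ∀ x, gauge s₀ x ≤ M * gauge s₁ x := by
  obtain ⟨r, hr, hr₀⟩ := Metric.mem_nhds_iff.1 h₀
  obtain ⟨R, hR, hR₁⟩ := hb.subset_closedBall_lt 0 0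
  refine ⟨R / r, fun x => ?_⟩
  have hle₀ : r * gauge s₀ x ≤ ‖x‖ := mul_gauge_le_norm hr₀
  have hle₁ : ‖x‖ / R ≤ gauge s₁ x :=
    le_gauge_of_subset_closedBall (absorbent_nhds_zero h₁) hR.le hR₁
  rw [div_le_iff₀ hR] at hle₁
  rw [div_mul_eq_mul_div, le_div_iff₀ hr]
  nlinarith

theorem exists_gauge_le_mul_gauge_and_symm {s₀ s₁ : Set E} (h₀ : s₀ ∈ 𝓝 0) (h₁ : s₁ ∈ 𝓝 0)
    (hb₀ : Bornology.IsBounded s₀) (hb₁ : Bornology.IsBounded s₁) :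
    ∃ M, 1 ≤ M ∧ (∀ x, gauge s₀ x ≤ M * gauge s₁ x) ∧ ∀ x, gauge s₁ x ≤ M * gauge s₀ x := by
  obtain ⟨M₀₁, hM₀₁⟩ := exists_gauge_le_mul_gauge h₀ h₁ hb₁
  obtain ⟨M₁₀, hM₁₀⟩ := exists_gauge_le_mul_gauge h₁ h₀ hb₀
  refine ⟨max (max M₀₁ M₁₀) 1, le_max_right _ _, fun x => ?_, fun x => ?_⟩
  · exact (hM₀₁ x).trans (mul_le_mul_of_nonneg_right
      ((le_max_left _ _).trans (le_max_left _ _)) (gauge_nonneg x))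
  · exact (hM₁₀ x).trans (mul_le_mul_of_nonneg_right
      ((le_max_right _ _).trans (le_max_left _ _)) (gauge_nonneg x))

def mixGauge (s₀ s₁ : Set E) (t : ℝ) (x : E) : ℝ := (1 - t) * gauge s₀ x + t * gauge s₁ x

def mixSet (s₀ s₁ : Set E) (t : ℝ) : Set E := {x | mixGauge s₀ s₁ t x < 1}

theorem mixGauge_smul_of_nonneg (s₀ s₁ : Set E) (t : ℝ) {c : ℝ} (hc : 0 ≤ c) (x : E) :
    mixGauge s₀ s₁ t (c • x) = c * mixGauge s₀ s₁ t x := by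
  simp only [mixGauge, gauge_smul_of_nonneg hc, smul_eq_mul]
  ring

theorem abs_sub_le_mul_convexCombo {a b M t : ℝ} (ha : 0 ≤ a) (hb : 0 ≤ b) (hab : a ≤ M * b)
    (hba : b ≤ M * a) (hM : 1 ≤ M) (ht : t ∈ Icc (0 : ℝ) 1) :
    |b - a| ≤ M * ((1 - t) * a + t * b) := by
  obtain ⟨ht₀, ht₁⟩ := ht
  rw [abs_le]
  constructor <;> nlinarith [mul_nonneg ht₀ ha, mul_nonneg ht₀ hb,
    mul_nonneg (sub_nonneg.2 ht₁) ha, mul_nonneg (sub_nonneg.2 ht₁) hb]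

theorem mixGauge_le_mul {s₀ s₁ : Set E} {M : ℝ} (hM : 1 ≤ M)
    (h₀₁ : ∀ x, gauge s₀ x ≤ M * gauge s₁ x) (h₁₀ : ∀ x, gauge s₁ x ≤ M * gauge s₀ x)
    {s t : ℝ} (ht : t ∈ Icc (0 : ℝ) 1) (x : E) :
    mixGauge s₀ s₁ s x ≤ (1 + M * |s - t|) * mixGauge s₀ s₁ t x := by
  have hdiff := abs_sub_le_mul_convexCombo (gauge_nonneg x) (gauge_nonneg x) (h₀₁ x) (h₁₀ x) hM ht
  have hprod : (s - t) * (gauge s₁ x - gauge s₀ x) ≤ |s - t| * (M * mixGauge s₀ s₁ t x) :=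
    (le_abs_self _).trans (abs_mul (s - t) _ ▸ mul_le_mul_of_nonneg_left hdiff (abs_nonneg _))
  simp only [mixGauge] at hprod ⊢
  nlinarith

theorem mixSet_subset_smul {s₀ s₁ : Set E} {M : ℝ} (hM : 1 ≤ M)
    (h₀₁ : ∀ x, gauge s₀ x ≤ M * gauge s₁ x) (h₁₀ : ∀ x, gauge s₁ x ≤ M * gauge s₀ x)
    {s t : ℝ} (hs : s ∈ Icc (0 : ℝ) 1) :
    mixSet s₀ s₁ s ⊆ (1 + M * |s - t|) • mixSet s₀ s₁ t := by
  intro x hx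
  have hc : 0 < 1 + M * |s - t| := by positivity
  rw [mem_smul_set_iff_inv_smul_mem₀ hc.ne']
  change mixGauge s₀ s₁ t (_ • x) < 1
  rw [mixGauge_smul_of_nonneg _ _ _ (inv_nonneg.2 hc.le), inv_mul_lt_iff₀ hc, mul_one]
  have := mixGauge_le_mul hM h₀₁ h₁₀ (s := t) hs x
  rw [abs_sub_comm] at this
  have hx' : mixGauge s₀ s₁ s x < 1 := hx
  nlinarith

theorem mixSet_zero {s₀ : Set E} (s₁ : Set E) (hc : Convex ℝ s₀) (h0 : (0 : E) ∈ s₀)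
    (ho : IsOpen s₀) : mixSet s₀ s₁ 0 = s₀ := by
  simpa [mixSet, mixGauge] using setOfPred_gauge_lt_one_eq_self_of_isOpen hc h0 ho

theorem mixSet_one (s₀ : Set E) {s₁ : Set E} (hc : Convex ℝ s₁) (h0 : (0 : E) ∈ s₁)
    (ho : IsOpen s₁) : mixSet s₀ s₁ 1 = s₁ := by
  simpa [mixSet, mixGauge] using setOfPred_gauge_lt_one_eq_self_of_isOpen hc h0 ho

theorem isOpen_mixSet {s₀ s₁ : Set E} (hc₀ : Convex ℝ s₀) (hc₁ : Convex ℝ s₁) (h₀ : s₀ ∈ 𝓝 0)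
    (h₁ : s₁ ∈ 𝓝 0) (t : ℝ) : IsOpen (mixSet s₀ s₁ t) :=
  isOpen_lt (by unfold mixGauge; fun_prop (disch := assumption) [continuous_gauge])
    continuous_const

theorem convex_mixSet {s₀ s₁ : Set E} (hc₀ : Convex ℝ s₀) (hc₁ : Convex ℝ s₁)
    (h₀ : Absorbent ℝ s₀) (h₁ : Absorbent ℝ s₁) {t : ℝ} (ht : t ∈ Icc (0 : ℝ) 1) :
    Convex ℝ (mixSet s₀ s₁ t) := by
  have hconv : ConvexOn ℝ univ (mixGauge s₀ s₁ t) :=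
    ((convexOn_gauge hc₀ h₀).smul (sub_nonneg.2 ht.2)).add ((convexOn_gauge hc₁ h₁).smul ht.1)
  simpa [mixSet] using hconv.convex_lt 1

theorem mem_mixSet_iff_apply_mem {s₀ s₁ : Set E} {σ : E → E} (hσ : ∀ (c : ℝ) x, σ (c • x) = c • σ x)
    (h₀ : ∀ x, x ∈ s₀ ↔ σ x ∈ s₀) (h₁ : ∀ x, x ∈ s₁ ↔ σ x ∈ s₁) (t : ℝ) (x : E) :
    x ∈ mixSet s₀ s₁ t ↔ σ x ∈ mixSet s₀ s₁ t := by
  simp only [mixSet, mixGauge, Set.mem_ofPred_eq, gauge_apply_eq_of_mem_iff hσ h₀,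
    gauge_apply_eq_of_mem_iff hσ h₁]

end Gauge

theorem memA.zero_mem {Ω : Set E2} (h : memA Ω) : (0 : E2) ∈ Ω := by
  obtain ⟨⟨p, hp⟩, -, -, hconv, hsym₁, hsym₂⟩ := h
  have hneg : -p ∈ Ω := by
    convert (hsym₂ _).1 ((hsym₁ p).1 hp) using 1
    ext i; fin_cases i <;> simp
  simpa using hconv.midpoint_mem hp hneg

theorem memA.mem_nhds_zero {Ω : Set E2} (h : memA Ω) : Ω ∈ 𝓝 (0 : E2) :=
  h.2.1.mem_nhds h.zero_mem

theorem memA_mixSet {Ω₀ Ω₁ : Set E2} (h₀ : memA Ω₀) (h₁ : memA Ω₁) {M : ℝ} (hM : 1 ≤ M)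
    (h₀₁ : ∀ x, gauge Ω₀ x ≤ M * gauge Ω₁ x) (h₁₀ : ∀ x, gauge Ω₁ x ≤ M * gauge Ω₀ x)
    {t : ℝ} (ht : t ∈ Icc (0 : ℝ) 1) : memA (mixSet Ω₀ Ω₁ t) := by
  have hn₀ := h₀.mem_nhds_zero
  have hn₁ := h₁.mem_nhds_zero
  have hz₀ := h₀.zero_mem
  obtain ⟨-, hopen₀, hbdd₀, hconv₀, hsym₁₀, hsym₂₀⟩ := h₀
  obtain ⟨-, hopen₁, -, hconv₁, hsym₁₁, hsym₂₁⟩ := h₁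
  refine ⟨⟨0, by simp [mixSet, mixGauge]⟩,
    isOpen_mixSet hconv₀ hconv₁ hn₀ hn₁ t, ?_,
    convex_mixSet hconv₀ hconv₁ (absorbent_nhds_zero hn₀)
      (absorbent_nhds_zero hn₁) ht,
    mem_mixSet_iff_apply_mem (σ := fun p : E2 => !₂[-(p 0), p 1]) ?_ hsym₁₀ hsym₁₁ t,
    mem_mixSet_iff_apply_mem (σ := fun p : E2 => !₂[p 0, -(p 1)]) ?_ hsym₂₀ hsym₂₁ t⟩
  · refine (hbdd₀.smul₀ (1 + M * |t - 0|)).subset ?_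
    simpa only [mixSet_zero Ω₁ hconv₀ hz₀ hopen₀] using
      mixSet_subset_smul hM h₀₁ h₁₀ (t := 0) ht
  all_goals intro c p; ext i; fin_cases i <;> simp

theorem continuousOn_of_le_pow_mul {f : ℝ → ℝ} {S : Set ℝ} {K : ℝ} {k : ℕ} (hK : 0 ≤ K)
    (h : ∀ s ∈ S, ∀ t ∈ S, f s ≤ (1 + K * |s - t|) ^ k * f t) : ContinuousOn f S := by
  intro t ht
  have hc : Continuous fun s => (1 + K * |s - t|) ^ k := by fun_prop
  have hc₁ : Tendsto (fun s => (1 + K * |s - t|) ^ k) (𝓝 t) (𝓝 1) := by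
    simpa using hc.tendsto t
  have hlower : Tendsto (fun s => f t / (1 + K * |s - t|) ^ k) (𝓝 t) (𝓝 (f t)) := by
    have := tendsto_const_nhds.div hc₁ one_ne_zero (a := f t)
    rwa [div_one] at this
  have hupper : Tendsto (fun s => (1 + K * |s - t|) ^ k * f t) (𝓝 t) (𝓝 (f t)) := by
    simpa only [one_mul] using hc₁.mul_const (f t)
  refine tendsto_of_tendsto_of_tendsto_of_le_of_le' (hlower.mono_left nhdsWithin_le_nhds)
    (hupper.mono_left nhdsWithin_le_nhds)
    (eventually_nhdsWithin_of_forall fun s hs => ?_)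
    (eventually_nhdsWithin_of_forall fun s hs => h s hs t ht)
  rw [div_le_iff₀' (by positivity), abs_sub_comm]
  exact h t ht s hs

/-- If `g` vanishes somewhere on `S`, it vanishes on all of `S`, where `f / g` is then the junk
value `0`. -/
theorem continuousOn_div_of_le_pow_mul {f g : ℝ → ℝ} {S : Set ℝ} {K : ℝ} {k : ℕ} (hK : 0 ≤ K)
    (hf : ContinuousOn f S) (hg₀ : ∀ t ∈ S, 0 ≤ g t)
    (hg : ∀ s ∈ S, ∀ t ∈ S, g s ≤ (1 + K * |s - t|) ^ k * g t) :
    ContinuousOn (fun t => f t / g t) S := by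
  by_cases hzero : ∃ t ∈ S, g t = 0
  · obtain ⟨t, ht, hgt⟩ := hzero
    refine continuousOn_const (c := 0).congr fun s hs => ?_
    have : g s = 0 := le_antisymm (by simpa [hgt] using hg s hs t ht) (hg₀ s hs)
    simp [this]
  · push Not at hzero
    exact hf.div (continuousOn_of_le_pow_mul hK hg) hzero

theorem ENNReal.toReal_le_mul_toReal {a b : ℝ≥0∞} {c c' : ℝ} (hc : 0 ≤ c)
    (hab : a ≤ ENNReal.ofReal c * b) (hba : b ≤ ENNReal.ofReal c' * a) :
    a.toReal ≤ c * b.toReal := by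
  by_cases hb : b = ⊤
  · have ha : a = ⊤ := by
      by_contra ha
      exact (hb ▸ hba).not_gt (ENNReal.mul_lt_top ENNReal.ofReal_lt_top (lt_top_iff_ne_top.2 ha))
    simp [ha, hb]
  · calc a.toReal ≤ (ENNReal.ofReal c * b).toReal :=
          ENNReal.toReal_mono (ENNReal.mul_ne_top ENNReal.ofReal_ne_top hb) hab
      _ = c * b.toReal := by rw [ENNReal.toReal_mul, ENNReal.toReal_ofReal hc]

theorem volume_le_of_subset_smul {S T : Set E2} {c : ℝ} (h : S ⊆ c • T) :
    volume S ≤ ENNReal.ofReal (c ^ 2) * volume T := by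
  simpa [Measure.addHaar_smul, finrank_euclideanSpace_fin] using measure_mono (μ := volume) h

theorem hausdorffMeasure_frontier_le_of_subset_smul {S T : Set E2} (hS : Convex ℝ S)
    (hSo : IsOpen S) (hT : Bornology.IsBounded T) {c : ℝ} (hc : 0 < c) (h : S ⊆ c • T) :
    μH[1] (frontier S) ≤ ENNReal.ofReal c * μH[1] (frontier T) := by
  calc μH[1] (frontier S) ≤ μH[1] (frontier (c • T)) :=
        hausdorffMeasure_frontier_mono hS hSo (hT.smul₀ c) h zero_le_one
    _ = ENNReal.ofReal c * μH[1] (frontier T) := by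
        rw [frontier_smul₀ hc.ne', Measure.hausdorffMeasure_smul₀ zero_le_one hc.ne']
        simp [ENNReal.smul_def, ← ENNReal.ofReal_coe_nnreal, abs_of_pos hc]

theorem inertia_smul {c : ℝ} (hc : 0 < c) (S : Set E2) : inertia (c • S) = c ^ 4 * inertia S := by
  have h := Measure.setIntegral_comp_smul_of_pos volume (fun p : E2 => ‖p‖ ^ 2) S hc
  simp only [norm_smul, mul_pow, Real.norm_of_nonneg hc.le, integral_const_mul,
    finrank_euclideanSpace_fin, smul_eq_mul] at h
  rw [eq_inv_mul_iff_mul_eq₀ (by positivity)] at h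
  rw [inertia, inertia, ← h]
  ring

theorem inertia_le_of_subset_smul {S T : Set E2} (hT : Bornology.IsBounded T) {c : ℝ} (hc : 0 < c)
    (h : S ⊆ c • T) : inertia S ≤ c ^ 4 * inertia T := by
  rw [← inertia_smul hc]
  have hbdd := hT.smul₀ c
  exact setIntegral_mono_set
    ((continuous_norm.pow 2).continuousOn.integrableOn_compact hbdd.isCompact_closure
      |>.mono_set subset_closure)
    (.of_forall fun _ => by positivity) h.eventuallyLE

theorem continuousOn_xF_yF {S : Set ℝ} {F : ℝ → Set E2} {K : ℝ} (hK : 0 ≤ K)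
    (hF : ∀ t ∈ S, memA (F t)) (hsub : ∀ s ∈ S, ∀ t ∈ S, F s ⊆ (1 + K * |s - t|) • F t) :
    ContinuousOn (fun t => (xF (F t), yF (F t))) S := by
  have hc (s t : ℝ) : 0 < 1 + K * |s - t| := by positivity
  have harea : ∀ s ∈ S, ∀ t ∈ S, area (F s) ≤ (1 + K * |s - t|) ^ 2 * area (F t) :=
    fun s hs t ht => ENNReal.toReal_le_mul_toReal (by positivity)
      (volume_le_of_subset_smul (hsub s hs t ht)) (volume_le_of_subset_smul (hsub t ht s hs))
  have hinertia : ∀ s ∈ S, ∀ t ∈ S, inertia (F s) ≤ (1 + K * |s - t|) ^ 4 * inertia (F t) :=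
    fun s hs t ht => inertia_le_of_subset_smul (hF t ht).2.2.1 (hc s t) (hsub s hs t ht)
  have hperim : ∀ s ∈ S, ∀ t ∈ S, perim (F s) ≤ (1 + K * |s - t|) * perim (F t) :=
    fun s hs t ht => ENNReal.toReal_le_mul_toReal (hc s t).le
      (hausdorffMeasure_frontier_le_of_subset_smul (hF s hs).2.2.2.1 (hF s hs).2.1
        (hF t ht).2.2.1 (hc s t) (hsub s hs t ht))
      (hausdorffMeasure_frontier_le_of_subset_smul (hF t ht).2.2.2.1 (hF t ht).2.1
        (hF s hs).2.2.1 (hc t s) (hsub t ht s hs))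
  have hareaC := continuousOn_of_le_pow_mul hK harea
  refine ContinuousOn.prodMk ?_ ?_
  · refine continuousOn_div_of_le_pow_mul (f := fun t => area (F t) ^ 2)
      (g := fun t => 2 * Real.pi * inertia (F t)) (k := 4) hK (hareaC.pow 2)
      (fun t _ => by unfold inertia; positivity) fun s hs t ht => ?_
    rw [mul_left_comm]
    exact mul_le_mul_of_nonneg_left (hinertia s hs t ht) (by positivity)
  · refine continuousOn_div_of_le_pow_mul (f := fun t => 4 * Real.pi * area (F t))
      (g := fun t => perim (F t) ^ 2) (k := 2) hK (hareaC.const_smul (4 * Real.pi))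
      (fun t _ => by positivity) fun s hs t ht => ?_
    have := pow_le_pow_left₀ ENNReal.toReal_nonneg (hperim s hs t ht) 2
    rwa [mul_pow] at this

/-- the diagram 𝒟 is path-connected. -/
theorem stmt3 (Q₀ Q₁ : ℝ × ℝ) (h₀ : Q₀ ∈ diag) (h₁ : Q₁ ∈ diag) :
    ∃ γ : ℝ → ℝ × ℝ, ContinuousOn γ (Set.Icc 0 1) ∧ γ 0 = Q₀ ∧ γ 1 = Q₁ ∧
      ∀ t ∈ Set.Icc (0 : ℝ) 1, γ t ∈ diag := by
  obtain ⟨Ω₀, hΩ₀, rfl⟩ := h₀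
  obtain ⟨Ω₁, hΩ₁, rfl⟩ := h₁
  obtain ⟨M, hM, h₀₁, h₁₀⟩ := exists_gauge_le_mul_gauge_and_symm hΩ₀.mem_nhds_zero
    hΩ₁.mem_nhds_zero hΩ₀.2.2.1 hΩ₁.2.2.1
  have hmem (t : ℝ) (ht : t ∈ Icc (0 : ℝ) 1) : memA (mixSet Ω₀ Ω₁ t) :=
    memA_mixSet hΩ₀ hΩ₁ hM h₀₁ h₁₀ ht
  refine ⟨fun t => (xF (mixSet Ω₀ Ω₁ t), yF (mixSet Ω₀ Ω₁ t)),
    continuousOn_xF_yF (zero_le_one.trans hM) hmem fun s hs t _ => mixSet_subset_smul hM h₀₁ h₁₀ hs,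
    ?_, ?_, fun t ht => ⟨_, hmem t ht, rfl⟩⟩
  · simp only [mixSet_zero Ω₁ hΩ₀.2.2.2.1 hΩ₀.zero_mem hΩ₀.2.1]
  · simp only [mixSet_one Ω₀ hΩ₁.2.2.2.1 hΩ₁.zero_mem hΩ₁.2.1]
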